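/- Let γ be a map from the vertices of ℤ² to the set of circles in ℝ^{4,2}, i.e. 3-dimensional subspaces γ_i ⊂ {p}^⊥ on which the form has signature (2,1). Suppose that to each edge (i,j) there is assigned a_{ij} ∈ ℝ^{4,2} with a_{ij} = a_{ji}, ⟨a_{ij},a_{ij}⟩ ≠ 0 and ⟨a_{ij},p⟩ = 0, such that the M-Lie inversion σ_{ij} := σ_{a_{ij}} maps γ_j onto γ_i, and such that for every elementary quadrilateral (i,j,k,l) of ℤ² the composition σ_{ij} ∘ σ_{jk} ∘ σ_{kl} ∘ σ_{li} is the identity of ℝ^{4,2} (a flat connection). Call a 2-dimensional totally isotropic subspace f orthogonal to the circle γ_i if f ∩ γ_i ≠ {0} and ⟨s, c + ⟨c,p⟩p⟩ = 0 for every s ∈ f and every lightlike c ∈ γ_i^⊥. Then for every vertex i₀ and every contact element f₀ orthogonal to γ_{i₀}, the parallel transport of f₀ by the maps σ along lattice paths is path-independent, and the resulting contact element f_i at each vertex i is orthogonal to γ_i. (Converse part of the theorem characterizing cyclic circle congruences: a flat connection of M-Lie inversions exchanging adjacent circles yields a family of orthogonal nets.) -/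

import Mathlib

/-!
Each `σ_a` with `⟨a,a⟩ ≠ 0`, `⟨a,p⟩ = 0` is an involutive isometry of `ℝ^{4,2}` fixing `p`.
A flat connection on `ℤ²` whose edge maps are mutually inverse is trivial: transporting first
along the row of `i₀` and then along the columns gives maps `T i` with `T i₀ = 1` and
`T i = σ_{ij} T j` for all edges, flatness being exactly what makes the horizontal edges
compatible. Hence `f i := T i f₀` is the path-independent transport. Orthogonality of a contact
element to a circle is invariant under isometries fixing `p`, and `σ_{ij}` maps `γ_j` onto `γ_i`,
so it propagates from `i₀` to every vertex.
-/

noncomputable section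

/-- The vector space ℝ^{4,2}, modeled as `Fin 6 → ℝ`. -/
abbrev R42 : Type := Fin 6 → ℝ

/-- The symmetric bilinear form of signature (4,2) on ℝ^{4,2}. -/
def bform : R42 →ₗ[ℝ] R42 →ₗ[ℝ] ℝ :=
  LinearMap.mk₂ ℝ
    (fun x y => x 0 * y 0 + x 1 * y 1 + x 2 * y 2 + x 3 * y 3 - x 4 * y 4 - x 5 * y 5)
    (fun x x' y => by simp only [Pi.add_apply]; ring)
    (fun c x y => by simp only [Pi.smul_apply, smul_eq_mul]; ring)
    (fun x y y' => by simp only [Pi.add_apply]; ring)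
    (fun c x y => by simp only [Pi.smul_apply, smul_eq_mul]; ring)

/-- A lightlike vector: nonzero and isotropic. Represents an oriented 2-sphere. -/
def IsLightlike (v : R42) : Prop := v ≠ 0 ∧ bform v v = 0

/-- The Lie inversion with respect to the linear sphere complex determined by `a`. -/
def lieInv (a r : R42) : R42 := r - (2 * bform r a / bform a a) • a

/-- The Lie inversion as a linear map. -/
def lieInvL (a : R42) : R42 →ₗ[ℝ] R42 :=
  LinearMap.id - (2 / bform a a) • LinearMap.smulRight (bform.flip a) a

/-- A contact element: a 2-dimensional totally isotropic subspace. -/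
def IsContactElement (f : Submodule ℝ R42) : Prop :=
  Module.finrank ℝ f = 2 ∧ ∀ u ∈ f, ∀ v ∈ f, bform u v = 0

/-- A circle: a 3-dimensional subspace of `{p}^⊥` on which the form has
signature (2,1), encoded by an orthogonal basis. -/
def IsCircle (p : R42) (γ : Submodule ℝ R42) : Prop :=
  (∀ v ∈ γ, bform v p = 0) ∧
  ∃ u v w : R42, γ = Submodule.span ℝ ({u, v, w} : Set R42) ∧
    bform u u = 1 ∧ bform v v = 1 ∧ bform w w = -1 ∧
    bform u v = 0 ∧ bform u w = 0 ∧ bform v w = 0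

/-- A contact element `f` is orthogonal to the circle `γ`: its point sphere lies on the
circle and all its spheres intersect every sphere through the circle orthogonally. -/
def OrthToCircle (p : R42) (γ f : Submodule ℝ R42) : Prop :=
  f ⊓ γ ≠ ⊥ ∧
  ∀ s ∈ f, ∀ c : R42, IsLightlike c → (∀ g ∈ γ, bform c g = 0) →
    bform s (c + bform c p • p) = 0

/-- Adjacency of vertices in the lattice ℤ². -/
def Adj (i j : ℤ × ℤ) : Prop :=
  (i.1 = j.1 ∧ (j.2 = i.2 + 1 ∨ i.2 = j.2 + 1)) ∨
  (i.2 = j.2 ∧ (j.1 = i.1 + 1 ∨ i.1 = j.1 + 1))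

open Submodule

lemma bform_comm (x y : R42) : bform x y = bform y x := by
  simp only [bform, LinearMap.mk₂_apply]; ring

section LieInversion

variable {a : R42}

lemma lieInvL_apply (a x : R42) : lieInvL a x = x - (2 / bform a a * bform x a) • a := by
  simp [lieInvL, LinearMap.smulRight_apply, smul_smul]

lemma lieInvL_eq_self {v : R42} (h : bform v a = 0) : lieInvL a v = v := by
  simp [lieInvL_apply, h]

lemma lieInvL_involutive (ha : bform a a ≠ 0) : Function.Involutive (lieInvL a) := fun x => by
  simp only [lieInvL_apply, map_sub, map_smul]
  match_scalars <;> field_simp; ring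

lemma lieInvL_mul_self (ha : bform a a ≠ 0) : lieInvL a * lieInvL a = 1 :=
  LinearMap.ext (lieInvL_involutive ha)

lemma isOrthogonal_lieInvL (ha : bform a a ≠ 0) : bform.IsOrthogonal (lieInvL a) := fun x y => by
  simp only [lieInvL_apply, map_sub, map_smul, LinearMap.sub_apply, LinearMap.smul_apply,
    smul_eq_mul]
  field_simp
  rw [bform_comm a y]
  ring

end LieInversion

theorem OrthToCircle.map {p : R42} {γ f : Submodule ℝ R42} (h : OrthToCircle p γ f)
    (φ : R42 ≃ₗ[ℝ] R42) (hφ : bform.IsOrthogonal φ) (hφp : φ p = p) :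
    OrthToCircle p (γ.map (φ : R42 →ₗ[ℝ] R42)) (f.map (φ : R42 →ₗ[ℝ] R42)) := by
  obtain ⟨hmeet, hsph⟩ := h
  have hφsymm : ∀ x y, bform (φ.symm x) y = bform x (φ y) := fun x y => by
    rw [← hφ, φ.apply_symm_apply]
  refine ⟨?_, fun s hs c hc hcγ => ?_⟩
  · rwa [← map_inf _ φ.injective, Ne, Submodule.map_eq_bot_iff]
  rw [mem_map_equiv] at hs
  have hc' : IsLightlike (φ.symm c) :=
    ⟨φ.symm.map_ne_zero_iff.2 hc.1, by rw [hφsymm, φ.apply_symm_apply, hc.2]⟩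
  have hcγ' : ∀ g ∈ γ, bform (φ.symm c) g = 0 := fun g hg => by
    rw [hφsymm]; exact hcγ _ (mem_map_of_mem hg)
  calc bform s (c + bform c p • p)
      = bform (φ (φ.symm s)) (φ (φ.symm c + bform (φ.symm c) p • p)) := by
        simp only [map_add, map_smul, hφp, hφsymm, φ.apply_symm_apply]
    _ = 0 := by rw [hφ]; exact hsph _ hs _ hc' hcγ'

theorem OrthToCircle.map_lieInvL {p a : R42} {γ f : Submodule ℝ R42} (h : OrthToCircle p γ f)
    (ha : bform a a ≠ 0) (hap : bform a p = 0) :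
    OrthToCircle p (γ.map (lieInvL a)) (f.map (lieInvL a)) :=
  h.map (.ofInvolutive _ (lieInvL_involutive ha)) (isOrthogonal_lieInvL ha)
    (lieInvL_eq_self (by rw [bform_comm, hap]))

theorem Int.forall_of_iff_succ {P : ℤ → Prop} (t₀ : ℤ) (h₀ : P t₀)
    (hstep : ∀ t, P t ↔ P (t + 1)) (t : ℤ) : P t :=
  Int.inductionOn' t t₀ h₀ (fun k _ hk => (hstep k).1 hk)
    (fun k _ hk => (hstep (k - 1)).2 (by rwa [sub_add_cancel]))

lemma Adj.symm {i j : ℤ × ℤ} (h : Adj i j) : Adj j i := by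
  unfold Adj at h ⊢; omega

theorem adj_induction {P : ℤ × ℤ → Prop} (i₀ : ℤ × ℤ) (h₀ : P i₀)
    (hstep : ∀ i j, Adj i j → P j → P i) (i : ℤ × ℤ) : P i := by
  have hstep' : ∀ i j, Adj i j → (P i ↔ P j) := fun i j hij =>
    ⟨hstep j i hij.symm, hstep i j hij⟩
  have row : ∀ x, P (x, i₀.2) :=
    Int.forall_of_iff_succ (P := fun x => P (x, i₀.2)) i₀.1 h₀
      fun x => hstep' _ _ (by unfold Adj; omega)
  exact Int.forall_of_iff_succ (P := fun y => P (i.1, y)) i₀.2 (row i.1)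
    (fun y => hstep' _ _ (by unfold Adj; omega)) i.2

section FlatConnection

variable {M : Type*} [Monoid M]

theorem Int.exists_transport (fwd bwd : ℤ → M) (h : ∀ t, fwd t * bwd t = 1) (t₀ : ℤ) :
    ∃ W : ℤ → M, W t₀ = 1 ∧ ∀ t, W (t + 1) = fwd t * W t := by
  let W : ℤ → M := fun t => Int.inductionOn' (motive := fun _ => M) t t₀ 1
    (fun k _ w => fwd k * w) (fun k _ w => bwd (k - 1) * w)
  refine ⟨W, Int.inductionOn'_self, fun t => ?_⟩
  rcases le_or_gt t₀ t with ht | ht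
  · exact Int.inductionOn'_add_one ht
  · have hback : W t = bwd t * W (t + 1) := by
      simpa using Int.inductionOn'_sub_one (motive := fun _ => M) (z := t + 1) (b := t₀)
        (zero := 1) (succ := fun k _ w => fwd k * w) (pred := fun k _ w => bwd (k - 1) * w)
        (by omega)
    rw [hback, ← mul_assoc, h, one_mul]

theorem exists_transport_of_flat (σ : ℤ × ℤ → ℤ × ℤ → M)
    (hinv : ∀ i j, Adj i j → σ i j * σ j i = 1)
    (hflat : ∀ x y : ℤ, σ (x, y) (x + 1, y) * σ (x + 1, y) (x + 1, y + 1) *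
      σ (x + 1, y + 1) (x, y + 1) * σ (x, y + 1) (x, y) = 1)
    (i₀ : ℤ × ℤ) :
    ∃ T : ℤ × ℤ → M, T i₀ = 1 ∧ ∀ i j, Adj i j → T i = σ i j * T j := by
  have square : ∀ x y : ℤ, σ (x + 1, y + 1) (x + 1, y) * σ (x + 1, y) (x, y) =
      σ (x + 1, y + 1) (x, y + 1) * σ (x, y + 1) (x, y) := fun x y => by
    calc _ = σ (x + 1, y + 1) (x + 1, y) * σ (x + 1, y) (x, y) *
          (σ (x, y) (x + 1, y) * σ (x + 1, y) (x + 1, y + 1) *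
            σ (x + 1, y + 1) (x, y + 1) * σ (x, y + 1) (x, y)) := by rw [hflat, mul_one]
      _ = σ (x + 1, y + 1) (x + 1, y) * (σ (x + 1, y) (x, y) * σ (x, y) (x + 1, y)) *
          σ (x + 1, y) (x + 1, y + 1) * (σ (x + 1, y + 1) (x, y + 1) * σ (x, y + 1) (x, y)) := by
        simp only [mul_assoc]
      _ = _ := by
        rw [hinv _ _ (by unfold Adj; omega), mul_one, hinv _ _ (by unfold Adj; omega), one_mul]
  obtain ⟨H, hH₀, hH⟩ := Int.exists_transport (fun x => σ (x + 1, i₀.2) (x, i₀.2))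
    (fun x => σ (x, i₀.2) (x + 1, i₀.2)) (fun x => hinv _ _ (by unfold Adj; omega)) i₀.1
  choose V hV₀ hV using fun x => Int.exists_transport (fun y => σ (x, y + 1) (x, y))
    (fun y => σ (x, y) (x, y + 1)) (fun y => hinv _ _ (by unfold Adj; omega)) i₀.2
  let T : ℤ × ℤ → M := fun i => V i.1 i.2 * H i.1
  have vert : ∀ x y, T (x, y + 1) = σ (x, y + 1) (x, y) * T (x, y) := fun x y => by
    simp only [T, hV, mul_assoc]
  have horiz : ∀ x y, T (x + 1, y) = σ (x + 1, y) (x, y) * T (x, y) := fun x =>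
    Int.forall_of_iff_succ i₀.2 (by simp only [T, hV₀, one_mul, hH]) fun y => by
      rw [vert, vert, ← mul_assoc (σ (x + 1, y + 1) (x, y + 1)), ← square, mul_assoc]
      exact (Function.Injective.eq_iff (isLeftRegular_of_mul_eq_one
        (hinv (x + 1, y) (x + 1, y + 1) (by unfold Adj; omega)))).symm
  have flip : ∀ i j, Adj i j → T i = σ i j * T j → T j = σ j i * T i := fun i j hij h => by
    rw [h, ← mul_assoc, hinv j i hij.symm, one_mul]
  refine ⟨T, by simp only [T, hV₀, hH₀, mul_one], fun i j hij => ?_⟩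
  obtain ⟨x, y⟩ := i
  obtain ⟨x', y'⟩ := j
  simp only [Adj] at hij
  rcases hij with ⟨rfl, rfl | rfl⟩ | ⟨rfl, rfl | rfl⟩
  · exact flip _ _ (by unfold Adj; omega) (vert _ _)
  · exact vert _ _
  · exact flip _ _ (by unfold Adj; omega) (horiz _ _)
  · exact horiz _ _

end FlatConnection

theorem stmt_17_general (p : R42)
    (γ : ℤ × ℤ → Submodule ℝ R42)
    (a : ℤ × ℤ → ℤ × ℤ → R42)
    (hsym : ∀ i j, Adj i j → a i j = a j i)
    (hnn : ∀ i j, Adj i j → bform (a i j) (a i j) ≠ 0)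
    (hap : ∀ i j, Adj i j → bform (a i j) p = 0)
    (hmap : ∀ i j, Adj i j → Submodule.map (lieInvL (a i j)) (γ j) = γ i)
    (hflat : ∀ x y : ℤ, ∀ v : R42,
      lieInvL (a (x, y) (x + 1, y))
        (lieInvL (a (x + 1, y) (x + 1, y + 1))
          (lieInvL (a (x + 1, y + 1) (x, y + 1))
            (lieInvL (a (x, y + 1) (x, y)) v))) = v)
    (i₀ : ℤ × ℤ) (f₀ : Submodule ℝ R42)
    (horth₀ : OrthToCircle p (γ i₀) f₀) :
    ∃ f : ℤ × ℤ → Submodule ℝ R42,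
      f i₀ = f₀ ∧
      (∀ i j, Adj i j → Submodule.map (lieInvL (a i j)) (f j) = f i) ∧
      (∀ i, OrthToCircle p (γ i) (f i)) ∧
      ∀ g : ℤ × ℤ → Submodule ℝ R42,
        g i₀ = f₀ → (∀ i j, Adj i j → Submodule.map (lieInvL (a i j)) (g j) = g i) →
        g = f := by
  obtain ⟨T, hT₀, hT⟩ := exists_transport_of_flat (fun i j => lieInvL (a i j))
    (fun i j hij => by simp only [← hsym i j hij, lieInvL_mul_self (hnn i j hij)])
    (fun x y => LinearMap.ext (hflat x y)) i₀
  have hf₀ : f₀.map (T i₀) = f₀ := by rw [hT₀, Module.End.one_eq_id, map_id]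
  have hedge : ∀ i j, Adj i j → (f₀.map (T j)).map (lieInvL (a i j)) = f₀.map (T i) :=
    fun i j hij => by rw [hT i j hij, Module.End.mul_eq_comp, map_comp]
  have horth : ∀ i, OrthToCircle p (γ i) (f₀.map (T i)) :=
    adj_induction i₀ (by rwa [hf₀]) fun i j hij hj => by
      rw [← hmap i j hij, ← hedge i j hij]
      exact hj.map_lieInvL (hnn i j hij) (hap i j hij)
  refine ⟨fun i => f₀.map (T i), hf₀, hedge, horth, fun g hg₀ hg => funext ?_⟩
  exact adj_induction i₀ (by rw [hg₀, hf₀]) fun i j hij hj => by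
    rw [← hg i j hij, hj, hedge i j hij]

/-- A flat connection of M-Lie inversions exchanging adjacent circles
of a discrete circle congruence yields, from any initial orthogonal contact element,
a path-independent parallel transport whose resulting contact elements are orthogonal
to the circles: the congruence is cyclic. -/
theorem stmt_17 (p : R42) (hp : bform p p = -1)
    (γ : ℤ × ℤ → Submodule ℝ R42)
    (hγ : ∀ i, IsCircle p (γ i))
    (a : ℤ × ℤ → ℤ × ℤ → R42)
    (hsym : ∀ i j, Adj i j → a i j = a j i)
    (hnn : ∀ i j, Adj i j → bform (a i j) (a i j) ≠ 0)
    (hap : ∀ i j, Adj i j → bform (a i j) p = 0)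
    (hmap : ∀ i j, Adj i j → Submodule.map (lieInvL (a i j)) (γ j) = γ i)
    (hflat : ∀ x y : ℤ, ∀ v : R42,
      lieInvL (a (x, y) (x + 1, y))
        (lieInvL (a (x + 1, y) (x + 1, y + 1))
          (lieInvL (a (x + 1, y + 1) (x, y + 1))
            (lieInvL (a (x, y + 1) (x, y)) v))) = v)
    (i₀ : ℤ × ℤ) (f₀ : Submodule ℝ R42)
    (hf₀ : IsContactElement f₀) (horth₀ : OrthToCircle p (γ i₀) f₀) :
    ∃ f : ℤ × ℤ → Submodule ℝ R42,
      f i₀ = f₀ ∧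
      (∀ i j, Adj i j → Submodule.map (lieInvL (a i j)) (f j) = f i) ∧
      (∀ i, OrthToCircle p (γ i) (f i)) ∧
      ∀ g : ℤ × ℤ → Submodule ℝ R42,
        g i₀ = f₀ → (∀ i j, Adj i j → Submodule.map (lieInvL (a i j)) (g j) = g i) →
        g = f :=
  stmt_17_general p γ a hsym hnn hap hmap hflat i₀ f₀ horth₀
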